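/- arXiv:1805.08866 — 3 statements merged into one kernel-verified Lean document; each statement's English description precedes it below -/
import Mathlib

section
/- Let K : ℝ^k → P(ℝ^k) satisfy ε·d₂-privacy (Euclidean metric). Then the extended mechanism K* on length-n bags of word vectors, defined by K*(d)(z) = ∑_i ∏_j K(w_j)(v_{φ_i(j)}) summing over distinct permutations of z, satisfies ε-document-indistinguishability: K*(d)(z) ≤ e^{ε·d_W(d,d')} K*(d')(z) for all equal-length bags d, d' and outputs z, where d_W is the Word Mover's Distance with Euclidean cost. -/
/-!
Fix a permutation σ₀ attaining the Word Mover's Distance between d and d'. Privacy of K,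
applied word by word and multiplied over the n words, bounds every summand of K*(d)(z) by
`exp (ε * d_W(d, d'))` times the corresponding summand of K*(d' ∘ σ₀)(z). Finally
K*(d' ∘ σ₀) = K*(d'), because K* sums over all rearrangements of the output and so does not
see the order of the input words.
-/

open Finset

open scoped Classical in
/-- The extension K* of a per-word density mechanism K to length-n documents:
K*(d)(z) = ∑ over the distinct permutations u of the words of z of ∏ⱼ K(wⱼ)(uⱼ). -/
noncomputable def Kstar {k n : ℕ}
    (K : EuclideanSpace ℝ (Fin k) → EuclideanSpace ℝ (Fin k) → ℝ)
    (w v : Fin n → EuclideanSpace ℝ (Fin k)) : ℝ :=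
  ∑ u ∈ Finset.image (fun σ : Equiv.Perm (Fin n) => v ∘ σ) Finset.univ,
    ∏ j, K (w j) (u j)

section

variable {k n : ℕ}

theorem Kstar_comp_perm (K : EuclideanSpace ℝ (Fin k) → EuclideanSpace ℝ (Fin k) → ℝ)
    (w v : Fin n → EuclideanSpace ℝ (Fin k)) (τ : Equiv.Perm (Fin n)) :
    Kstar K (w ∘ τ) v = Kstar K w v := by
  unfold Kstar
  refine sum_nbij' (· ∘ τ.symm) (· ∘ τ) ?_ ?_ ?_ ?_ ?_
  · simpa using fun σ => ⟨σ * τ.symm, rfl⟩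
  · simpa using fun σ => ⟨σ * τ, rfl⟩
  · intro u _; ext1 j; simp
  · intro u _; ext1 j; simp
  · intro u _
    simpa using Equiv.prod_comp τ fun j => K (w j) (u (τ.symm j))

theorem Kstar_le_exp_mul_Kstar {ε : ℝ}
    {K : EuclideanSpace ℝ (Fin k) → EuclideanSpace ℝ (Fin k) → ℝ}
    (hK_nonneg : ∀ x z, 0 ≤ K x z)
    (hK_priv : ∀ x x' z, K x z ≤ Real.exp (ε * dist x x') * K x' z)
    (w w' v : Fin n → EuclideanSpace ℝ (Fin k)) :
    Kstar K w v ≤ Real.exp (ε * ∑ i, dist (w i) (w' i)) * Kstar K w' v := by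
  unfold Kstar
  rw [mul_sum]
  refine sum_le_sum fun u _ => ?_
  calc ∏ j, K (w j) (u j)
      ≤ ∏ j, Real.exp (ε * dist (w j) (w' j)) * K (w' j) (u j) :=
        prod_le_prod (fun j _ => hK_nonneg _ _) (fun j _ => hK_priv _ _ _)
    _ = Real.exp (ε * ∑ i, dist (w i) (w' i)) * ∏ j, K (w' j) (u j) := by
        rw [prod_mul_distrib, mul_sum, Real.exp_sum]
end

theorem Kstar_document_indistinguishability_general (k n : ℕ) (ε : ℝ)
    (K : EuclideanSpace ℝ (Fin k) → EuclideanSpace ℝ (Fin k) → ℝ)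
    (hK_nonneg : ∀ x z, 0 ≤ K x z)
    (hK_priv : ∀ x x' z, K x z ≤ Real.exp (ε * dist x x') * K x' z)
    (d d' z : Fin n → EuclideanSpace ℝ (Fin k)) :
    Kstar K d z ≤
      Real.exp (ε * ⨅ σ : Equiv.Perm (Fin n), ∑ i, dist (d i) (d' (σ i))) *
        Kstar K d' z := by
  obtain ⟨σ₀, hσ₀⟩ := exists_eq_ciInf_of_finite
    (f := fun σ : Equiv.Perm (Fin n) => ∑ i, dist (d i) (d' (σ i)))
  rw [← hσ₀, ← Kstar_comp_perm K d' z σ₀]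
  exact Kstar_le_exp_mul_Kstar hK_nonneg hK_priv d (d' ∘ σ₀) z

/-- if K satisfies ε·d₂-privacy on ℝ^k (density form), then K* satisfies
ε-document-indistinguishability with respect to the (unnormalised) Word Mover's Distance
d_W(d,d') = min_σ ∑ᵢ ‖wᵢ − w'_{σ(i)}‖₂. -/
theorem Kstar_document_indistinguishability (k n : ℕ) (ε : ℝ) (hε : 0 < ε)
    (K : EuclideanSpace ℝ (Fin k) → EuclideanSpace ℝ (Fin k) → ℝ)
    (hK_nonneg : ∀ x z, 0 ≤ K x z)
    (hK_priv : ∀ x x' z, K x z ≤ Real.exp (ε * dist x x') * K x' z)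
    (d d' z : Fin n → EuclideanSpace ℝ (Fin k)) :
    Kstar K d z ≤
      Real.exp (ε * ⨅ σ : Equiv.Perm (Fin n), ∑ i, dist (d i) (d' (σ i))) *
        Kstar K d' z :=
  Kstar_document_indistinguishability_general k n ε K hK_nonneg hK_priv d d' z
end

section
/- Let U be uniform on the unit sphere S^{n−1} ⊂ ℝ^n, R ~ Gamma(n, 1/ε) independent of U, and define the mechanism K(x) to be the distribution of x + R·U. Then K satisfies ε·d₂-privacy: for all x, x' ∈ ℝ^n and measurable Z ⊆ ℝ^n, K(x)(Z) ≤ e^{ε‖x−x'‖₂} K(x')(Z). -/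
open MeasureTheory

/-- The uniform probability distribution on the unit sphere of ℝⁿ, as a measure on ℝⁿ. -/
noncomputable def sphereUniform (n : ℕ) : Measure (EuclideanSpace ℝ (Fin n)) :=
  (((volume : Measure (EuclideanSpace ℝ (Fin n))).toSphere Set.univ)⁻¹ •
      (volume : Measure (EuclideanSpace ℝ (Fin n))).toSphere).map Subtype.val

/-- The n-dimensional Laplace mechanism: K(x) is the law of x + R·U where U is uniform on the
unit sphere and R ~ Gamma(n, 1/ε) (shape n, rate ε), independently. -/
noncomputable def laplaceMechanism (n : ℕ) (ε : ℝ) (x : EuclideanSpace ℝ (Fin n)) :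
    Measure (EuclideanSpace ℝ (Fin n)) :=
  ((ProbabilityTheory.gammaMeasure n ε).prod (sphereUniform n)).map
    (fun p => x + p.1 • p.2)

/-!
In polar coordinates, Lebesgue measure on ℝⁿ is the image of `r ^ (n - 1) dr ⊗ σ` under
`(r, u) ↦ r • u`, where `σ` is the surface measure of the unit sphere. The Gamma(n, ε) density is
proportional to `r ^ (n - 1) * exp (-ε r)`, so `R • U` has a density proportional to
`exp (-ε ‖w‖)` and `K x` one proportional to `exp (-ε ‖z - x‖)`. By the triangle inequality the
densities at `x` and `x'` differ by a factor of at most `exp (ε ‖x - x'‖)`.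
-/

open MeasureTheory Measure Set Metric Real ProbabilityTheory Module
open scoped ENNReal

lemma map_withDensity_comp {α β : Type*} [MeasurableSpace α] [MeasurableSpace β]
    (μ : Measure α) {T : α → β} (hT : Measurable T) {f : β → ℝ≥0∞} (hf : Measurable f) :
    (μ.withDensity fun a => f (T a)).map T = (μ.map T).withDensity f := by
  ext s hs
  rw [map_apply hT hs, withDensity_apply _ (hT hs), withDensity_apply _ hs,
    setLIntegral_map hs hf hT]

lemma map_subtypeVal_volumeIoiPow (k : ℕ) :
    (volumeIoiPow k).map Subtype.val =
      (volume.restrict (Ioi (0 : ℝ))).withDensity fun r => ENNReal.ofReal (r ^ k) := by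
  rw [volumeIoiPow, ← map_comap_subtype_coe measurableSet_Ioi]
  exact map_withDensity_comp (f := fun r : ℝ => ENNReal.ofReal (r ^ k)) _
    measurable_subtype_coe (by fun_prop)

section Polar

variable {E : Type*} [NormedAddCommGroup E] [NormedSpace ℝ E] [FiniteDimensional ℝ E]
  [MeasurableSpace E] [BorelSpace E] [Nontrivial E] (μ : Measure E) [μ.IsAddHaarMeasure]

theorem map_smul_prod_toSphere :
    (((volume.restrict (Ioi (0 : ℝ))).withDensity
        fun r => ENNReal.ofReal (r ^ (finrank ℝ E - 1))).prod (μ.toSphere.map Subtype.val)).map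
      (fun p : ℝ × E => p.1 • p.2) = μ := by
  have hpolar := (measurePreserving_homeomorphUnitSphereProd μ).map_eq
  rw [← map_subtypeVal_volumeIoiPow, map_prod_map _ _ measurable_subtype_coe
    measurable_subtype_coe, map_map (by fun_prop) (by fun_prop), ← prod_swap, ← hpolar,
    map_map (by fun_prop) measurable_swap, map_map (by fun_prop) (by fun_prop)]
  have hid : (((fun p : ℝ × E => p.1 • p.2) ∘ Prod.map Subtype.val Subtype.val) ∘ Prod.swap) ∘
      homeomorphUnitSphereProd E = Subtype.val := by
    funext p
    simp [smul_inv_smul₀ (norm_ne_zero_iff.2 p.2)]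
  rw [hid, map_comap_subtype_coe (measurableSet_singleton 0).compl, restrict_compl_singleton]

theorem map_smul_prod_toSphere_withDensity {g : ℝ → ℝ≥0∞} (hg : Measurable g) :
    (((volume.restrict (Ioi (0 : ℝ))).withDensity
        fun r => ENNReal.ofReal (r ^ (finrank ℝ E - 1)) * g r).prod
      (μ.toSphere.map Subtype.val)).map (fun p : ℝ × E => p.1 • p.2) =
      μ.withDensity fun w => g ‖w‖ := by
  set ρ := (volume.restrict (Ioi (0 : ℝ))).withDensity
    fun r => ENNReal.ofReal (r ^ (finrank ℝ E - 1))
  set σ := μ.toSphere.map Subtype.val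
  have hpos : ∀ᵐ p ∂(ρ.prod σ), 0 < p.1 :=
    quasiMeasurePreserving_fst.ae <|
      withDensity_absolutelyContinuous _ _ (ae_restrict_mem measurableSet_Ioi)
  have hunit : ∀ᵐ p ∂(ρ.prod σ), p.2 ∈ sphere (0 : E) 1 :=
    quasiMeasurePreserving_snd.ae <|
      (ae_map_iff measurable_subtype_coe.aemeasurable isClosed_sphere.measurableSet).2
        (ae_of_all _ fun u => u.2)
  have hnorm : (fun p : ℝ × E => g p.1) =ᵐ[ρ.prod σ] fun p => g ‖p.1 • p.2‖ := by
    filter_upwards [hpos, hunit] with p hp hu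
    rw [norm_smul, mem_sphere_zero_iff_norm.1 hu, mul_one, norm_of_nonneg hp.le]
  have hdensity : (volume.restrict (Ioi (0 : ℝ))).withDensity
      (fun r => ENNReal.ofReal (r ^ (finrank ℝ E - 1)) * g r) = ρ.withDensity g :=
    withDensity_mul _ (f := fun r => ENNReal.ofReal (r ^ (finrank ℝ E - 1))) (by fun_prop) hg
  rw [hdensity, prod_withDensity_left hg, withDensity_congr_ae hnorm,
    map_withDensity_comp (T := fun p : ℝ × E => p.1 • p.2) (f := fun w : E => g ‖w‖) _
      (by fun_prop) (by fun_prop),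
    map_smul_prod_toSphere]

end Polar

lemma gammaMeasure_natCast_eq_withDensity {n : ℕ} (hn : 0 < n) (ε : ℝ) :
    gammaMeasure n ε = (volume.restrict (Ioi (0 : ℝ))).withDensity fun r =>
      ENNReal.ofReal (r ^ (n - 1)) *
        (ENNReal.ofReal (ε ^ n / Gamma n) * ENNReal.ofReal (exp (-(ε * r)))) := by
  rw [gammaMeasure, ← withDensity_indicator measurableSet_Ioi]
  -- only a.e. equal: for `n = 1` the Gamma density does not vanish at `r = 0`
  refine withDensity_congr_ae ?_
  filter_upwards [Measure.ae_ne volume 0] with r hr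
  rcases hr.lt_or_gt with hneg | hpos
  · rw [gammaPDF_of_neg hneg, indicator_of_notMem (show r ∉ Ioi 0 from not_lt.2 hneg.le)]
  · rw [gammaPDF_of_nonneg hpos.le, indicator_of_mem (show r ∈ Ioi 0 from hpos),
      ← ENNReal.ofReal_mul' (exp_nonneg _), ← ENNReal.ofReal_mul (pow_nonneg hpos.le _),
      Real.rpow_natCast, ← Nat.cast_pred hn, Real.rpow_natCast]
    congr 1
    ring

lemma withDensity_exp_neg_dist_le {α : Type*} [PseudoMetricSpace α] [MeasurableSpace α]
    (μ : Measure α) (c : ℝ≥0∞) {ε : ℝ} (hε : 0 ≤ ε) (x x' : α) :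
    μ.withDensity (fun z => c * ENNReal.ofReal (exp (-(ε * dist z x)))) ≤
      ENNReal.ofReal (exp (ε * dist x x')) •
        μ.withDensity (fun z => c * ENNReal.ofReal (exp (-(ε * dist z x')))) := by
  rw [← withDensity_smul' _ _ ENNReal.ofReal_ne_top]
  refine withDensity_mono (ae_of_all _ fun z => ?_)
  have htri : -(ε * dist z x) ≤ ε * dist x x' + -(ε * dist z x') := by
    have := mul_le_mul_of_nonneg_left (dist_triangle z x x') hε
    linarith
  calc c * ENNReal.ofReal (exp (-(ε * dist z x)))
      ≤ c * ENNReal.ofReal (exp (ε * dist x x' + -(ε * dist z x'))) := by gcongr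
    _ = _ := by
      rw [exp_add, ENNReal.ofReal_mul (exp_nonneg _), Pi.smul_apply, smul_eq_mul]
      ring

lemma laplaceMechanism_eq_withDensity {n : ℕ} (hn : 0 < n) (ε : ℝ)
    (x : EuclideanSpace ℝ (Fin n)) :
    laplaceMechanism n ε x = volume.withDensity fun z =>
      ((volume : Measure (EuclideanSpace ℝ (Fin n))).toSphere univ)⁻¹ *
          ENNReal.ofReal (ε ^ n / Gamma n) * ENNReal.ofReal (exp (-(ε * dist z x))) := by
  have : Nonempty (Fin n) := ⟨⟨0, hn⟩⟩
  let g : ℝ → ℝ≥0∞ := fun r => ENNReal.ofReal (ε ^ n / Gamma n) * ENNReal.ofReal (exp (-(ε * r)))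
  have hg : Measurable g := by fun_prop
  have hpolar := map_smul_prod_toSphere_withDensity (volume : Measure (EuclideanSpace ℝ (Fin n))) hg
  rw [finrank_euclideanSpace_fin, ← gammaMeasure_natCast_eq_withDensity hn] at hpolar
  have hshift := map_withDensity_comp (T := (x + ·)) (f := fun z => g (dist z x)) volume
    (by fun_prop) (by fun_prop)
  simp only [dist_self_add_left, map_add_left_eq_self] at hshift
  have hcomp : (fun p : ℝ × EuclideanSpace ℝ (Fin n) => x + p.1 • p.2) =
      (x + ·) ∘ fun p => p.1 • p.2 := rfl
  rw [laplaceMechanism, sphereUniform, Measure.map_smul, prod_smul_right, Measure.map_smul, hcomp,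
    ← map_map (by fun_prop) (by fun_prop), hpolar, hshift, ← withDensity_smul _ (by fun_prop)]
  simp only [g, mul_assoc]
  rfl

lemma laplaceMechanism_le_smul {n : ℕ} (hn : 0 < n) {ε : ℝ} (hε : 0 ≤ ε)
    (x x' : EuclideanSpace ℝ (Fin n)) :
    laplaceMechanism n ε x ≤ ENNReal.ofReal (exp (ε * dist x x')) • laplaceMechanism n ε x' := by
  rw [laplaceMechanism_eq_withDensity hn, laplaceMechanism_eq_withDensity hn]
  exact withDensity_exp_neg_dist_le _ _ hε x x'

/-- the mechanism x ↦ law of x + R·U satisfies ε·d₂-privacy. -/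
theorem laplaceMechanism_privacy (n : ℕ) (hn : 0 < n) (ε : ℝ) (hε : 0 < ε) :
    ∀ x x' : EuclideanSpace ℝ (Fin n), ∀ Z : Set (EuclideanSpace ℝ (Fin n)),
      MeasurableSet Z →
        laplaceMechanism n ε x Z ≤
          ENNReal.ofReal (Real.exp (ε * dist x x')) * laplaceMechanism n ε x' Z :=
  fun x x' Z _ => laplaceMechanism_le_smul hn hε.le x x' Z
end

section
/- If mechanisms K₁ : X₁ → P(Z₁) and K₂ : X₂ → P(Z₂) satisfy ε·d₁-privacy and ε·d₂-privacy respectively, then the product mechanism K(x₁,x₂) = K₁(x₁) ⊗ K₂(x₂) satisfies ε·d-privacy on X₁ × X₂ with d((x₁,x₂),(x₁',x₂')) = d₁(x₁,x₁') + d₂(x₂,x₂'). -/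
/-! Writing the privacy bound of `Kᵢ` as the measure inequality `Kᵢ x ≤ e^{ε dᵢ(x,x')} • Kᵢ x'`,
the claim follows from monotonicity of the product measure in both factors, since scalars pull out
of either factor and `e^{ε(d₁ + d₂)} = e^{ε d₁} e^{ε d₂}`. -/

open MeasureTheory
open scoped ENNReal

namespace MeasureTheory.Measure

variable {α β : Type*} [MeasurableSpace α] [MeasurableSpace β]

theorem le_smul_iff {μ ν : Measure α} {c : ℝ≥0∞} :
    μ ≤ c • ν ↔ ∀ s, MeasurableSet s → μ s ≤ c * ν s := by
  simp only [le_iff, smul_apply, smul_eq_mul]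

theorem prod_le_smul_prod {μ μ' : Measure α} {ν ν' : Measure β} [SFinite ν'] {a b : ℝ≥0∞}
    (hμ : μ ≤ a • μ') (hν : ν ≤ b • ν') : μ.prod ν ≤ (a * b) • μ'.prod ν' :=
  (prod_mono hμ hν).trans_eq (by rw [prod_smul_left, prod_smul_right, smul_smul])

end MeasureTheory.Measure

theorem product_mechanism_privacy_general {X₁ X₂ Z₁ Z₂ : Type*}
    [MetricSpace X₁] [MetricSpace X₂] [MeasurableSpace Z₁] [MeasurableSpace Z₂] (ε : ℝ)
    (K₁ : X₁ → Measure Z₁) (K₂ : X₂ → Measure Z₂)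
    [∀ x, IsProbabilityMeasure (K₂ x)]
    (h₁ : ∀ x x' : X₁, ∀ A : Set Z₁, MeasurableSet A →
      K₁ x A ≤ ENNReal.ofReal (Real.exp (ε * dist x x')) * K₁ x' A)
    (h₂ : ∀ x x' : X₂, ∀ A : Set Z₂, MeasurableSet A →
      K₂ x A ≤ ENNReal.ofReal (Real.exp (ε * dist x x')) * K₂ x' A) :
    ∀ p p' : X₁ × X₂, ∀ A : Set (Z₁ × Z₂), MeasurableSet A →
      (K₁ p.1).prod (K₂ p.2) A ≤
        ENNReal.ofReal (Real.exp (ε * (dist p.1 p'.1 + dist p.2 p'.2))) *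
          (K₁ p'.1).prod (K₂ p'.2) A := by
  intro p p'
  rw [mul_add, Real.exp_add, ENNReal.ofReal_mul (Real.exp_nonneg _), ← Measure.le_smul_iff]
  exact Measure.prod_le_smul_prod (Measure.le_smul_iff.2 (h₁ p.1 p'.1))
    (Measure.le_smul_iff.2 (h₂ p.2 p'.2))

/-- if K₁ satisfies ε·d₁-privacy and K₂ satisfies ε·d₂-privacy then the product
mechanism (x₁,x₂) ↦ K₁(x₁) ⊗ K₂(x₂) satisfies ε·d-privacy for the sum metric
d((x₁,x₂),(x₁',x₂')) = d₁(x₁,x₁') + d₂(x₂,x₂'). -/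
theorem product_mechanism_privacy {X₁ X₂ Z₁ Z₂ : Type*}
    [MetricSpace X₁] [MetricSpace X₂] [MeasurableSpace Z₁] [MeasurableSpace Z₂] (ε : ℝ)
    (K₁ : X₁ → Measure Z₁) (K₂ : X₂ → Measure Z₂)
    [∀ x, IsProbabilityMeasure (K₁ x)] [∀ x, IsProbabilityMeasure (K₂ x)]
    (h₁ : ∀ x x' : X₁, ∀ A : Set Z₁, MeasurableSet A →
      K₁ x A ≤ ENNReal.ofReal (Real.exp (ε * dist x x')) * K₁ x' A)
    (h₂ : ∀ x x' : X₂, ∀ A : Set Z₂, MeasurableSet A →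
      K₂ x A ≤ ENNReal.ofReal (Real.exp (ε * dist x x')) * K₂ x' A) :
    ∀ p p' : X₁ × X₂, ∀ A : Set (Z₁ × Z₂), MeasurableSet A →
      (K₁ p.1).prod (K₂ p.2) A ≤
        ENNReal.ofReal (Real.exp (ε * (dist p.1 p'.1 + dist p.2 p'.2))) *
          (K₁ p'.1).prod (K₂ p'.2) A :=
  product_mechanism_privacy_general ε K₁ K₂ h₁ h₂
end
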